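/- arXiv:1912.01434 — 2 statements merged into one kernel-verified Lean document; each statement's English description precedes it below -/
import Mathlib

section
/- Let n ≥ 3 and let p, q be integers with 2 ≤ p < q ≤ n. Let i_p, i_q be integers with 1 ≤ i_p < p and 1 ≤ i_q < q, and suppose q - i_q ≥ p. Then in S_n the following exchange law holds: t_q^{i_q} · t_p^{i_p} = t_{i_q+i_p}^{i_q} · t_{p+i_q}^{i_p} · t_q^{i_q}. -/
/- We work in the symmetric group on `Fin n` (representing `{1, ..., n}` via `i ↦ i - 1`).
The paper multiplies permutations left-to-right: `(π₁ · π₂)(i) = π₂(π₁(i))`,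
while Mathlib's `*` on `Equiv.Perm` is function composition: `(π₁ * π₂)(i) = π₁(π₂(i))`.
Hence a paper product `A · B · C` is rendered below as `C * B * A`. -/

/-- `sP n i` is the transposition `sᵢ = (i, i+1)` (1-indexed), for `1 ≤ i ≤ n - 1`. -/
def sP (n i : ℕ) : Equiv.Perm (Fin n) :=
  if h : 1 ≤ i ∧ i < n then
    Equiv.swap ⟨i - 1, lt_of_le_of_lt (Nat.sub_le i 1) h.2⟩ ⟨i, h.2⟩
  else 1

/-- `tP n m` is `t_m = s₁ · s₂ ⋯ s_{m-1}` (paper's left-to-right product, so here the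
factor for larger index is multiplied on the left).  `tP n 0 = tP n 1 = 1`. -/
def tP (n m : ℕ) : Equiv.Perm (Fin n) :=
  (List.range (m - 1)).foldl (fun g j => sP n (j + 1) * g) 1

/-- `uP n r` is `u_{2r} = t_{2r-2} · s_{2r-1}` (paper order; here reversed). -/
def uP (n r : ℕ) : Equiv.Perm (Fin n) := sP n (2 * r - 1) * tP n (2 * r - 2)

/-- `vP n r` is `v_{2r} = t_{2r}²`. -/
def vP (n r : ℕ) : Equiv.Perm (Fin n) := (tP n (2 * r)) ^ 2

/-! On `{0, …, n - 1}`, `t_m^k` (for `k ≤ m ≤ n`) rotates the initial block `{0, …, m - 1}`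
down by `k` and fixes everything above it. Both sides of the exchange law are therefore
piecewise translations of `Fin n`, and the law is checked pointwise by comparing the
translations on each piece. -/

lemma sP_apply_val {n i : ℕ} (hi : 1 ≤ i) (hin : i < n) (x : Fin n) :
    (sP n i x : ℕ) = if (x : ℕ) = i - 1 then i else if (x : ℕ) = i then i - 1 else x := by
  rw [sP, dif_pos ⟨hi, hin⟩, Equiv.swap_apply_def]
  simp only [Fin.ext_iff, apply_ite Fin.val]

lemma tP_succ {n m : ℕ} (hm : 1 ≤ m) : tP n (m + 1) = sP n m * tP n m := by
  obtain ⟨m, rfl⟩ := Nat.exists_eq_add_of_le' hm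
  simp [tP, List.range_succ, List.foldl_append]

lemma tP_apply_val {n m : ℕ} (hm : 1 ≤ m) (hmn : m ≤ n) (x : Fin n) :
    (tP n m x : ℕ) = if (x : ℕ) = 0 then m - 1 else if (x : ℕ) < m then x - 1 else x := by
  induction m, hm using Nat.le_induction with
  | base =>
    simp only [show tP n 1 = 1 from rfl, Equiv.Perm.one_apply]
    split_ifs <;> omega
  | succ m hm ih =>
    rw [tP_succ hm, Equiv.Perm.mul_apply, sP_apply_val hm (by omega), ih (by omega)]
    split_ifs <;> omega

lemma tP_pow_apply_val {n m k : ℕ} (hkm : k ≤ m) (hmn : m ≤ n) (x : Fin n) :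
    ((tP n m ^ k) x : ℕ) =
      if (x : ℕ) < k then x + m - k else if (x : ℕ) < m then x - k else x := by
  induction k with
  | zero => simp
  | succ k ih =>
    rw [pow_succ', Equiv.Perm.mul_apply, tP_apply_val (by omega) hmn, ih (by omega)]
    split_ifs <;> omega

theorem exchange_law_case1_general (n p q ip iq : ℕ) (hq : q ≤ n) (hip2 : ip < p) (hiq2 : iq < q)
    (h : p ≤ q - iq) :
    tP n p ^ ip * tP n q ^ iq =
      tP n q ^ iq * tP n (p + iq) ^ ip * tP n (iq + ip) ^ iq := by
  ext x
  simp only [Equiv.Perm.mul_apply]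
  rw [tP_pow_apply_val hip2.le (by omega), tP_pow_apply_val hiq2.le hq,
    tP_pow_apply_val hiq2.le hq, tP_pow_apply_val (by omega) (by omega),
    tP_pow_apply_val (by omega) (by omega)]
  have hx := x.isLt
  split_ifs <;> omega

/-- exchange law, case `q - i_q ≥ p`:
`t_q^{i_q} · t_p^{i_p} = t_{i_q+i_p}^{i_q} · t_{p+i_q}^{i_p} · t_q^{i_q}` (paper order;
rendered here in composition order, i.e. reversed). -/
theorem exchange_law_case1 (n p q ip iq : ℕ) (hn : 3 ≤ n)
    (hp : 2 ≤ p) (hpq : p < q) (hq : q ≤ n)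
    (hip1 : 1 ≤ ip) (hip2 : ip < p) (hiq1 : 1 ≤ iq) (hiq2 : iq < q)
    (h : p ≤ q - iq) :
    tP n p ^ ip * tP n q ^ iq =
      tP n q ^ iq * tP n (p + iq) ^ ip * tP n (iq + ip) ^ iq :=
  exchange_law_case1_general n p q ip iq hq hip2 hiq2 h
end

section
/- Let n ≥ 4 and let r be an integer with 2 ≤ r and 2r ≤ n. Then in S_n the conjugate of u_{2r} by v_{2r} satisfies: v_{2r} · u_{2r} · v_{2r}^{-1} = s_1 · s_3 · s_4 · s_5 ··· s_{2r-1}, i.e., it equals s_1 times the product of s_i over i = 3, 4, ..., 2r-1 taken in increasing order. -/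
/-! A run `s_a ⋯ s_{a+k-1}` of adjacent transpositions is a cycle shifting `a-1, …, a+k-1`
(0-indexed) one step, which gives closed forms for `t_m`, `v_{2r} = t_{2r}²` and `u_{2r}`.
With them, `u_{2r}v_{2r}` (composition order) and `v_{2r}(s_{2r-1} ⋯ s_3 s_1)` are both seen to
reverse `0, 1, 2` onto `2r-1, 2r-2, 2r-3`, shift `3, …, 2r-1` down by three and fix the rest;
that equality is the claimed conjugation. -/

/-- The paper's product `s_a · s_{a+1} ⋯ s_{a+k-1}`, in composition order. -/
def sRun (n a k : ℕ) : Equiv.Perm (Fin n) :=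
  (List.range k).foldl (fun g j => sP n (j + a) * g) 1

section

variable {n : ℕ}

lemma sP_val_apply {i : ℕ} (hi : 1 ≤ i) (hin : i < n) (x : Fin n) :
    (sP n i x : ℕ) = if (x : ℕ) = i - 1 then i else if (x : ℕ) = i then i - 1 else x := by
  rw [sP, dif_pos ⟨hi, hin⟩]
  simp only [Equiv.swap_apply_def, Fin.ext_iff]
  split_ifs <;> simp_all

lemma sRun_succ (a k : ℕ) : sRun n a (k + 1) = sP n (k + a) * sRun n a k := by
  simp only [sRun, List.range_succ, List.foldl_append, List.foldl_cons, List.foldl_nil]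

lemma foldl_sP_mul_eq_sRun_mul (a k : ℕ) (g : Equiv.Perm (Fin n)) :
    (List.range k).foldl (fun g j => sP n (j + a) * g) g = sRun n a k * g := by
  induction k with
  | zero => simp [sRun]
  | succ k ih =>
    simp only [List.range_succ, List.foldl_append, List.foldl_cons, List.foldl_nil, ih]
    rw [sRun_succ, mul_assoc]

lemma tP_eq_sRun (m : ℕ) : tP n m = sRun n 1 (m - 1) := rfl

lemma sRun_val_apply {a k : ℕ} (ha : 1 ≤ a) (hakn : a + k ≤ n) (x : Fin n) :
    (sRun n a k x : ℕ) =
      if (x : ℕ) = a - 1 then a + k - 1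
      else if a ≤ (x : ℕ) ∧ (x : ℕ) < a + k then x - 1 else x := by
  induction k with
  | zero =>
    simp only [sRun, List.range_zero, List.foldl_nil, Equiv.Perm.one_apply]
    split_ifs <;> omega
  | succ k ih =>
    rw [sRun_succ, Equiv.Perm.mul_apply, sP_val_apply (by omega) (by omega), ih (by omega)]
    split_ifs <;> omega

lemma vP_val_apply {r : ℕ} (hr : 1 ≤ r) (hrn : 2 * r ≤ n) (x : Fin n) :
    (vP n r x : ℕ) =
      if (x : ℕ) = 0 then 2 * r - 2 else if (x : ℕ) = 1 then 2 * r - 1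
      else if (x : ℕ) < 2 * r then x - 2 else x := by
  rw [vP, sq, Equiv.Perm.mul_apply, tP_eq_sRun]
  simp only [sRun_val_apply le_rfl (show 1 + (2 * r - 1) ≤ n by omega)]
  split_ifs <;> omega

lemma uP_val_apply {r : ℕ} (hr : 2 ≤ r) (hrn : 2 * r ≤ n) (x : Fin n) :
    (uP n r x : ℕ) =
      if (x : ℕ) = 0 then 2 * r - 3 else if (x : ℕ) < 2 * r - 2 then x - 1
      else if (x : ℕ) = 2 * r - 2 then 2 * r - 1
      else if (x : ℕ) = 2 * r - 1 then 2 * r - 2 else x := by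
  rw [uP, Equiv.Perm.mul_apply, sP_val_apply (by omega) (by omega), tP_eq_sRun,
    sRun_val_apply le_rfl (by omega)]
  split_ifs <;> omega

lemma uP_mul_vP_val_apply {r : ℕ} (hr : 2 ≤ r) (hrn : 2 * r ≤ n) (x : Fin n) :
    ((uP n r * vP n r) x : ℕ) =
      if (x : ℕ) < 3 then 2 * r - 1 - x else if (x : ℕ) < 2 * r then x - 3 else x := by
  rw [Equiv.Perm.mul_apply, uP_val_apply hr hrn, vP_val_apply (by omega) hrn]
  split_ifs <;> omega

lemma vP_mul_sRun_mul_sP_one_val_apply {r : ℕ} (hr : 2 ≤ r) (hrn : 2 * r ≤ n) (x : Fin n) :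
    ((vP n r * (sRun n 3 (2 * r - 3) * sP n 1)) x : ℕ) =
      if (x : ℕ) < 3 then 2 * r - 1 - x else if (x : ℕ) < 2 * r then x - 3 else x := by
  rw [Equiv.Perm.mul_apply, Equiv.Perm.mul_apply, vP_val_apply (by omega) hrn,
    sRun_val_apply (by omega) (by omega), sP_val_apply le_rfl (by omega)]
  split_ifs <;> first | contradiction | omega

end

theorem conj_u_by_v_general (n r : ℕ) (hr : 2 ≤ r) (hrn : 2 * r ≤ n) :
    (vP n r)⁻¹ * uP n r * vP n r =
      (List.range (2 * r - 3)).foldl (fun acc j => sP n (j + 3) * acc) (sP n 1) := by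
  rw [foldl_sP_mul_eq_sRun_mul, mul_assoc, inv_mul_eq_iff_eq_mul]
  ext x
  rw [uP_mul_vP_val_apply hr hrn, vP_mul_sRun_mul_sP_one_val_apply hr hrn]

/-- for `2 ≤ r` with `2r ≤ n`,
`v_{2r} · u_{2r} · v_{2r}⁻¹ = s₁ · s₃ · s₄ ⋯ s_{2r-1}` (paper order; rendered here in
composition order, i.e. reversed: the conjugation is `v⁻¹ * u * v` and the right-hand
side is `s_{2r-1} * ⋯ * s₄ * s₃ * s₁`).  The index `j ∈ range (2r-3)` corresponds to
the transposition index `i = j + 3`. -/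
theorem conj_u_by_v (n r : ℕ) (hn : 4 ≤ n) (hr : 2 ≤ r) (hrn : 2 * r ≤ n) :
    (vP n r)⁻¹ * uP n r * vP n r =
      (List.range (2 * r - 3)).foldl (fun acc j => sP n (j + 3) * acc) (sP n 1) :=
  conj_u_by_v_general n r hr hrn
end
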